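/- arXiv:2404.14439 — 2 statements merged into one kernel-verified Lean document; each statement's English description precedes it below -/
import Mathlib

section
/- For all n, k ≥ 0, the type B q-Stirling number satisfies S_B[n,k] = Σ_{ρ ∈ S_B(⟨n⟩,k)} q^{inv ρ}, where the sum is over standard type B partitions of ⟨n⟩ with 2k+1 blocks. -/
open Finset Polynomial

/-- The ground set ⟨n⟩ = {-n, ..., -1, 0, 1, ..., n}. -/
noncomputable def angleB (n : ℕ) : Finset ℤ := Finset.Icc (-(n : ℤ)) (n : ℤ)

/-- An ordered type B (signed) partition of ⟨n⟩ with 2k+1 blocks: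
pairwise disjoint nonempty blocks covering ⟨n⟩, with 0 ∈ S₀, S₀ closed under
negation, and S_{2i} = -S_{2i-1} for i ≥ 1. -/
def IsOrderedB (n k : ℕ) (S : Fin (2*k+1) → Finset ℤ) : Prop :=
  (∀ i, (S i).Nonempty) ∧
  (∀ i j, i ≠ j → Disjoint (S i) (S j)) ∧
  (Finset.univ.biUnion S = angleB n) ∧
  ((0 : ℤ) ∈ S 0) ∧
  (∀ x ∈ S 0, -x ∈ S 0) ∧
  (∀ i : ℕ, 1 ≤ i → ∀ h : 2*i < 2*k+1,
    S ⟨2*i, h⟩ = (S ⟨2*i-1, by omega⟩).image (fun x => -x))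

/-- m_j = min |S_j| (0 if the block is empty). -/
def mB {m : ℕ} (S : Fin m → Finset ℤ) (j : Fin m) : ℤ :=
  WithTop.untopD 0 (((S j).image (fun x => |x|)).min)

/-- M_j = max |S_j| (0 if the block is empty). -/
def MB {m : ℕ} (S : Fin m → Finset ℤ) (j : Fin m) : ℤ :=
  WithBot.unbotD 0 (((S j).image (fun x => |x|)).max)

/-- A standard type B partition: ordered, with m_{2i} ∈ S_{2i} for i ≥ 1 and
0 = m₀ < m₂ < m₄ < ... < m_{2k}. -/
def IsStandardB (n k : ℕ) (S : Fin (2*k+1) → Finset ℤ) : Prop :=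
  IsOrderedB n k S ∧
  (∀ i : ℕ, 1 ≤ i → ∀ h : 2*i < 2*k+1, mB S ⟨2*i, h⟩ ∈ S ⟨2*i, h⟩) ∧
  (∀ i : ℕ, ∀ h : 2*(i+1) < 2*k+1, mB S ⟨2*i, by omega⟩ < mB S ⟨2*(i+1), h⟩)

/-- inv ρ: number of pairs (s, S_j) with s ∈ S_i for some i < j and s ≥ m_j. -/
noncomputable def invB {m : ℕ} (S : Fin m → Finset ℤ) : ℕ :=
  {p : ℤ × Fin m | (∃ i < p.2, p.1 ∈ S i) ∧ mB S p.2 ≤ p.1}.ncard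

/-- ros_B = inv. -/
noncomputable def rosB {m : ℕ} (S : Fin m → Finset ℤ) : ℕ := invB S

/-- los_{B'}: pairs (s, S_j) with s ∈ S_i for some i > j and s ≥ m_j. -/
noncomputable def losB' {m : ℕ} (S : Fin m → Finset ℤ) : ℕ :=
  {p : ℤ × Fin m | (∃ i, p.2 < i ∧ p.1 ∈ S i) ∧ mB S p.2 ≤ p.1}.ncard

/-- lob_{B'}: pairs (s, S_j) with s ∈ S_i for some i > j and 0 < s ≤ m_j. -/
noncomputable def lobB' {m : ℕ} (S : Fin m → Finset ℤ) : ℕ :=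
  {p : ℤ × Fin m | (∃ i, p.2 < i ∧ p.1 ∈ S i) ∧ 0 < p.1 ∧ p.1 ≤ mB S p.2}.ncard

/-- rcb_B: pairs (s, S_j) with s ∈ S_i for some i < j and 0 < s ≤ M_j. -/
noncomputable def rcbB {m : ℕ} (S : Fin m → Finset ℤ) : ℕ :=
  {p : ℤ × Fin m | (∃ i < p.2, p.1 ∈ S i) ∧ 0 < p.1 ∧ p.1 ≤ MB S p.2}.ncard

/-- rob_B: pairs (s, S_j) with s ∈ S_i for some i < j and 0 < s ≤ m_j. -/
noncomputable def robB {m : ℕ} (S : Fin m → Finset ℤ) : ℕ :=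
  {p : ℤ × Fin m | (∃ i < p.2, p.1 ∈ S i) ∧ 0 < p.1 ∧ p.1 ≤ mB S p.2}.ncard

/-- rcs_B: pairs (s, S_j) with s ∈ S_i for some i < j and s ≥ M_j. -/
noncomputable def rcsB {m : ℕ} (S : Fin m → Finset ℤ) : ℕ :=
  {p : ℤ × Fin m | (∃ i < p.2, p.1 ∈ S i) ∧ MB S p.2 ≤ p.1}.ncard

/-- Type B Stirling numbers of the second kind. -/
def StirB : ℕ → ℕ → ℕ
  | 0, 0 => 1
  | 0, _+1 => 0
  | n+1, 0 => StirB n 0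
  | n+1, k+1 => StirB n k + (2*(k+1)+1) * StirB n (k+1)

/-- [m] = 1 + q + ... + q^{m-1}. -/
noncomputable def qb (m : ℕ) : Polynomial ℤ := ∑ i ∈ Finset.range m, (Polynomial.X : Polynomial ℤ) ^ i

/-- Type B q-Stirling numbers of the second kind. -/
noncomputable def qStirB : ℕ → ℕ → Polynomial ℤ
  | 0, 0 => 1
  | 0, _+1 => 0
  | n+1, 0 => qStirB n 0
  | n+1, k+1 => qStirB n k + qb (2*(k+1)+1) * qStirB n (k+1)

/-- [2k]!! = [2k][2k-2]⋯[2]. -/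
noncomputable def qdf : ℕ → Polynomial ℤ
  | 0 => 1
  | k+1 => qb (2*(k+1)) * qdf k

/-- The complement map on ⟨n⟩: i ↦ n+1-i for i > 0, -i ↦ -(n+1-i), 0 ↦ 0. -/
def complB (n : ℕ) (x : ℤ) : ℤ :=
  if 0 < x then (n : ℤ) + 1 - x else if x < 0 then -((n : ℤ) + 1) - x else 0

/-- Complement of a partition, blockwise. -/
def complP (n : ℕ) {m : ℕ} (S : Fin m → Finset ℤ) : Fin m → Finset ℤ :=
  fun j => (S j).image (complB n)

/-- The index of the block paired with block i: 0 ↦ 0, 2ℓ-1 ↦ 2ℓ, 2ℓ ↦ 2ℓ-1. -/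
def pairIdx (k : ℕ) (i : Fin (2*k+1)) : Fin (2*k+1) :=
  if i.val = 0 then i
  else if h2 : i.val % 2 = 1 then ⟨i.val + 1, by omega⟩ else ⟨i.val - 1, by omega⟩

/-!
Let `T` be a standard partition of `⟨n + 1⟩` into `2k + 3` blocks and `T j` the block containing
`n + 1`. If `m_j = n + 1`, then `T j = {n + 1}` must be the last block: `j` cannot be odd, as
the even partner of `T j` has the same minimum and contains it, and the minima of the even blocks
increase. Its partner `{-(n + 1)}` comes just before it, and dropping the two leaves a standard
partition of `⟨n⟩` into `2k + 1` blocks with the same inversions. Otherwise removing `±(n + 1)` leaves all minima unchanged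
and gives a standard partition `S` of `⟨n⟩` into `2k + 3` blocks. Conversely `n + 1` can go into
any block `S i` (and `-(n + 1)` into its partner); as every minimum is at most `n`, the new
inversions are exactly the pairs `(n + 1, S j)` with `j > i`, so `∑_i q^(2k+2-i) = [2k + 3]`
reproduces the recurrence of `S_B`.
-/

def minAbs (T : Finset ℤ) : ℤ := WithTop.untopD 0 ((T.image (fun x => |x|)).min)

theorem mB_eq_minAbs {m : ℕ} (S : Fin m → Finset ℤ) (j : Fin m) : mB S j = minAbs (S j) := rfl

section minAbs

variable {T T' : Finset ℤ} {x a : ℤ}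

theorem minAbs_eq_min' (h : T.Nonempty) :
    minAbs T = (T.image (fun x => |x|)).min' (h.image _) := by
  rw [minAbs, ← Finset.coe_min' (h.image _), WithTop.untopD_coe]

theorem exists_mem_abs_eq_minAbs (h : T.Nonempty) : ∃ x ∈ T, |x| = minAbs T := by
  simpa [minAbs_eq_min' h] using Finset.min'_mem _ (h.image (fun x => |x|))

theorem minAbs_le_abs (hx : x ∈ T) : minAbs T ≤ |x| := by
  rw [minAbs_eq_min' ⟨x, hx⟩]
  exact Finset.min'_le _ _ (mem_image_of_mem _ hx)

theorem le_minAbs (h : T.Nonempty) (ha : ∀ y ∈ T, a ≤ |y|) : a ≤ minAbs T := by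
  rw [minAbs_eq_min' h]
  exact Finset.le_min' _ _ _ (by simpa using ha)

theorem minAbs_nonneg (T : Finset ℤ) : 0 ≤ minAbs T := by
  rcases T.eq_empty_or_nonempty with rfl | h
  · simp [minAbs]
  · exact le_minAbs h fun y _ => abs_nonneg y

theorem minAbs_eq_zero_of_zero_mem (h : 0 ∈ T) : minAbs T = 0 :=
  le_antisymm (by simpa using minAbs_le_abs h) (minAbs_nonneg T)

theorem minAbs_singleton (a : ℤ) : minAbs {a} = |a| := by simp [minAbs]

theorem minAbs_eq_of_subset (hsub : T' ⊆ T) (hne : T'.Nonempty)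
    (hbig : ∀ x ∈ T, x ∉ T' → minAbs T' ≤ |x|) : minAbs T = minAbs T' := by
  refine le_antisymm ?_ (le_minAbs (hne.mono hsub) fun y hy => ?_)
  · obtain ⟨x, hx, hxe⟩ := exists_mem_abs_eq_minAbs hne
    exact hxe ▸ minAbs_le_abs (hsub hx)
  · by_cases hy' : y ∈ T'
    · exact minAbs_le_abs hy'
    · exact hbig y hy hy'

end minAbs

theorem mB_nonneg {m : ℕ} (S : Fin m → Finset ℤ) (j : Fin m) : 0 ≤ mB S j := minAbs_nonneg _

section angleB

variable {n : ℕ} {x : ℤ}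

theorem mem_angleB : x ∈ angleB n ↔ |x| ≤ n := by
  rw [angleB, mem_Icc, abs_le]

theorem zero_mem_angleB : 0 ∈ angleB n := by simp [mem_angleB]

theorem neg_mem_angleB : -x ∈ angleB n ↔ x ∈ angleB n := by simp [mem_angleB]

theorem mem_angleB_succ :
    x ∈ angleB (n + 1) ↔ x ∈ angleB n ∨ x = n + 1 ∨ x = -(n + 1) := by
  simp only [mem_angleB]
  push_cast
  rcases abs_cases x with ⟨h, _⟩ | ⟨h, _⟩ <;> omega

theorem angleB_subset_succ : angleB n ⊆ angleB (n + 1) :=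
  fun _ hx => mem_angleB_succ.2 (Or.inl hx)

theorem natCast_add_one_notMem_angleB : (n + 1 : ℤ) ∉ angleB n := by
  simp [mem_angleB, abs_of_nonneg (by positivity : (0 : ℤ) ≤ n + 1)]

theorem neg_natCast_add_one_notMem_angleB : -(n + 1 : ℤ) ∉ angleB n := by
  rw [neg_mem_angleB]
  exact natCast_add_one_notMem_angleB

theorem minAbs_le_of_subset_angleB {T : Finset ℤ} (h : T.Nonempty) (hT : T ⊆ angleB n) :
    minAbs T ≤ n := by
  obtain ⟨x, hx, hxe⟩ := exists_mem_abs_eq_minAbs h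
  exact hxe ▸ mem_angleB.1 (hT hx)

theorem minAbs_inter_angleB {T : Finset ℤ} (h : T.Nonempty) (hT : minAbs T ≤ n) :
    minAbs (T ∩ angleB n) = minAbs T := by
  obtain ⟨x, hx, hxe⟩ := exists_mem_abs_eq_minAbs h
  have hx' : x ∈ T ∩ angleB n := mem_inter.2 ⟨hx, mem_angleB.2 (hxe ▸ hT)⟩
  refine (minAbs_eq_of_subset inter_subset_left ⟨x, hx'⟩ fun y hy hy' => ?_).symm
  have : (n : ℤ) < |y| := not_le.1 fun h => hy' (mem_inter.2 ⟨hy, mem_angleB.2 h⟩)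
  linarith [minAbs_le_abs hx']

end angleB

section pairIdx

variable {k : ℕ}

theorem pairIdx_cases (i : Fin (2*k+1)) :
    (i.val = 0 ∧ (pairIdx k i).val = 0) ∨
    (i.val % 2 = 1 ∧ (pairIdx k i).val = i.val + 1) ∨
    (i.val ≠ 0 ∧ i.val % 2 = 0 ∧ (pairIdx k i).val = i.val - 1) := by
  unfold pairIdx
  split_ifs <;> simp_all

theorem pairIdx_pairIdx (i : Fin (2*k+1)) : pairIdx k (pairIdx k i) = i := by
  ext
  rcases pairIdx_cases i with h | h | h <;> rcases pairIdx_cases (pairIdx k i) with h' | h' | h' <;>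
    omega

theorem pairIdx_ne_self {i : Fin (2*k+1)} (hi : i ≠ 0) : pairIdx k i ≠ i := by
  intro h
  apply hi
  ext
  rcases pairIdx_cases i with h' | h' | h' <;> simp only [h, Fin.val_zero] at h' ⊢ <;> omega

theorem pairIdx_odd {l : ℕ} (hl : 1 ≤ l) (h : 2*l < 2*k+1) :
    pairIdx k ⟨2*l-1, by omega⟩ = ⟨2*l, h⟩ := by
  ext
  rcases pairIdx_cases (k := k) ⟨2*l-1, by omega⟩ with h' | h' | h' <;> simp only at h' ⊢ <;>
    omega

theorem pairIdx_even {l : ℕ} (hl : 1 ≤ l) (h : 2*l < 2*k+1) :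
    pairIdx k ⟨2*l, h⟩ = ⟨2*l-1, by omega⟩ := by
  rw [← pairIdx_odd hl h, pairIdx_pairIdx]

theorem val_pairIdx_congr {k' : ℕ} {i : Fin (2*k+1)} {i' : Fin (2*k'+1)} (h : i.val = i'.val) :
    (pairIdx k i).val = (pairIdx k' i').val := by
  rcases pairIdx_cases i with h1 | h1 | h1 <;> rcases pairIdx_cases i' with h2 | h2 | h2 <;> omega

end pairIdx

namespace IsOrderedB

variable {n k : ℕ} {S : Fin (2*k+1) → Finset ℤ} {i j : Fin (2*k+1)} {x : ℤ}

theorem nonempty (hS : IsOrderedB n k S) (i : Fin (2*k+1)) : (S i).Nonempty := hS.1 i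

theorem eq_of_mem_of_mem (hS : IsOrderedB n k S) (hi : x ∈ S i) (hj : x ∈ S j) : i = j := by
  by_contra h
  exact disjoint_left.1 (hS.2.1 i j h) hi hj

theorem subset_angleB (hS : IsOrderedB n k S) (i : Fin (2*k+1)) : S i ⊆ angleB n := by
  rw [← hS.2.2.1]
  exact subset_biUnion_of_mem S (mem_univ i)

theorem exists_mem (hS : IsOrderedB n k S) (hx : x ∈ angleB n) : ∃ i, x ∈ S i := by
  rw [← hS.2.2.1] at hx
  simpa using hx

theorem zero_mem (hS : IsOrderedB n k S) : 0 ∈ S 0 := hS.2.2.2.1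

theorem natCast_add_one_notMem (hS : IsOrderedB n k S) (i : Fin (2*k+1)) : (n + 1 : ℤ) ∉ S i :=
  fun h => natCast_add_one_notMem_angleB (hS.subset_angleB i h)

theorem neg_natCast_add_one_notMem (hS : IsOrderedB n k S) (i : Fin (2*k+1)) :
    -(n + 1 : ℤ) ∉ S i :=
  fun h => neg_natCast_add_one_notMem_angleB (hS.subset_angleB i h)

theorem neg_mem_pairIdx (hS : IsOrderedB n k S) (hx : x ∈ S i) : -x ∈ S (pairIdx k i) := by
  obtain ⟨-, -, -, -, hneg, hpair⟩ := hS
  rcases pairIdx_cases i with ⟨h1, h2⟩ | ⟨h1, h2⟩ | ⟨h1, h2, h3⟩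
  · obtain rfl : i = 0 := Fin.ext h1
    exact hneg x hx
  · have hl : 1 ≤ (i.val + 1) / 2 := by omega
    have h2l : 2 * ((i.val + 1) / 2) < 2*k+1 := by omega
    have hi : i = ⟨2 * ((i.val + 1) / 2) - 1, by omega⟩ := Fin.ext (by simp only; omega)
    rw [hi, pairIdx_odd hl h2l, hpair _ hl h2l]
    exact mem_image_of_mem _ (hi ▸ hx)
  · have hl : 1 ≤ i.val / 2 := by omega
    have hi : i = ⟨2 * (i.val / 2), by omega⟩ := Fin.ext (by simp only; omega)
    have hp : pairIdx k i = ⟨2 * (i.val / 2) - 1, by omega⟩ := Fin.ext (by simp only; omega)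
    rw [hi, hpair _ hl] at hx
    obtain ⟨y, hy, rfl⟩ := mem_image.1 hx
    rwa [hp, neg_neg]

theorem mB_le (hS : IsOrderedB n k S) (i : Fin (2*k+1)) : mB S i ≤ n :=
  minAbs_le_of_subset_angleB (hS.nonempty i) (hS.subset_angleB i)

theorem mB_pairIdx_le (hS : IsOrderedB n k S) (i : Fin (2*k+1)) :
    mB S (pairIdx k i) ≤ mB S i := by
  obtain ⟨x, hx, hxe⟩ := exists_mem_abs_eq_minAbs (hS.nonempty i)
  rw [mB_eq_minAbs, mB_eq_minAbs, ← hxe, ← abs_neg]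
  exact minAbs_le_abs (hS.neg_mem_pairIdx hx)

theorem mB_pairIdx (hS : IsOrderedB n k S) (i : Fin (2*k+1)) : mB S (pairIdx k i) = mB S i :=
  le_antisymm (hS.mB_pairIdx_le i) (by simpa [pairIdx_pairIdx] using hS.mB_pairIdx_le (pairIdx k i))

end IsOrderedB

theorem isOrderedB_of_forall_mem {n k : ℕ} {S : Fin (2*k+1) → Finset ℤ}
    (hne : ∀ i, (S i).Nonempty) (huniq : ∀ i j, ∀ x ∈ S i, x ∈ S j → i = j)
    (hsub : ∀ i, S i ⊆ angleB n) (hcov : ∀ x ∈ angleB n, ∃ i, x ∈ S i) (h0 : 0 ∈ S 0)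
    (hneg : ∀ i, ∀ x ∈ S i, -x ∈ S (pairIdx k i)) : IsOrderedB n k S := by
  refine ⟨hne, fun i j hij => disjoint_left.2 fun x hi hj => hij (huniq i j x hi hj), ?_, h0,
    hneg 0, fun l hl h => ?_⟩
  · ext x
    simp only [mem_biUnion, mem_univ, true_and]
    exact ⟨fun ⟨i, hi⟩ => hsub i hi, hcov x⟩
  · ext x
    refine ⟨fun hx => mem_image.2 ⟨-x, ?_, neg_neg x⟩, fun hx => ?_⟩
    · simpa [pairIdx_even hl h] using hneg _ x hx
    · obtain ⟨y, hy, rfl⟩ := mem_image.1 hx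
      simpa [pairIdx_odd hl h] using hneg _ y hy

def invSet {m : ℕ} (S : Fin m → Finset ℤ) : Set (ℤ × Fin m) :=
  {p | (∃ i < p.2, p.1 ∈ S i) ∧ mB S p.2 ≤ p.1}

theorem invB_eq_ncard_invSet {m : ℕ} (S : Fin m → Finset ℤ) : invB S = (invSet S).ncard := rfl

theorem invSet_finite {m : ℕ} (S : Fin m → Finset ℤ) : (invSet S).Finite := by
  refine ((univ.biUnion S).finite_toSet.prod Set.finite_univ).subset ?_
  rintro ⟨s, j⟩ ⟨⟨i, -, hi⟩, -⟩
  exact ⟨by simpa using ⟨i, hi⟩, trivial⟩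

theorem invB_eq_zero_of_le_one {m : ℕ} (hm : m ≤ 1) (S : Fin m → Finset ℤ) :
    invB S = 0 := by
  rw [invB_eq_ncard_invSet, Set.ncard_eq_zero (invSet_finite S), Set.eq_empty_iff_forall_notMem]
  rintro ⟨s, j⟩ ⟨⟨i, hij, -⟩, -⟩
  have : i.val < j.val := hij
  omega

def insertPair (n k : ℕ) (i : Fin (2*k+1)) (S : Fin (2*k+1) → Finset ℤ) :
    Fin (2*k+1) → Finset ℤ :=
  fun j => S j ∪ (if j = i then {(n + 1 : ℤ)} else ∅) ∪
    (if j = pairIdx k i then {-(n + 1 : ℤ)} else ∅)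

section insertPair

variable {n k : ℕ} {S : Fin (2*k+1) → Finset ℤ} {i j : Fin (2*k+1)} {x : ℤ}

theorem mem_insertPair :
    x ∈ insertPair n k i S j ↔
      x ∈ S j ∨ (j = i ∧ x = n + 1) ∨ (j = pairIdx k i ∧ x = -(n + 1)) := by
  unfold insertPair
  split_ifs <;> simp_all <;> tauto

theorem subset_insertPair : S j ⊆ insertPair n k i S j :=
  fun _ hx => mem_insertPair.2 (Or.inl hx)

theorem natCast_add_one_mem_insertPair_iff (hS : IsOrderedB n k S) :
    (n + 1 : ℤ) ∈ insertPair n k i S j ↔ j = i := by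
  rw [mem_insertPair]
  refine ⟨?_, fun h => Or.inr (Or.inl ⟨h, rfl⟩)⟩
  rintro (h | ⟨h, -⟩ | ⟨-, h⟩)
  · exact absurd h (hS.natCast_add_one_notMem j)
  · exact h
  · omega

theorem mB_insertPair (hS : IsOrderedB n k S) (i j : Fin (2*k+1)) :
    mB (insertPair n k i S) j = mB S j := by
  refine minAbs_eq_of_subset subset_insertPair (hS.nonempty j) fun x hx hx' => ?_
  have hN : |x| = n + 1 := by
    rcases mem_insertPair.1 hx with h | ⟨-, rfl⟩ | ⟨-, rfl⟩
    · exact absurd h hx'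
    · exact abs_of_nonneg (by positivity)
    · rw [abs_neg]
      exact abs_of_nonneg (by positivity)
  have := hS.mB_le j
  rw [mB_eq_minAbs] at this
  omega

theorem isOrderedB_insertPair (hS : IsOrderedB n k S) (i : Fin (2*k+1)) :
    IsOrderedB (n + 1) k (insertPair n k i S) := by
  refine isOrderedB_of_forall_mem (fun j => (hS.nonempty j).mono subset_insertPair)
    (fun j j' x hx hx' => ?_) (fun j x hx => ?_) (fun x hx => ?_)
    (subset_insertPair hS.zero_mem) (fun j x hx => ?_)
  · rw [mem_insertPair] at hx hx'
    rcases hx with hx | ⟨rfl, rfl⟩ | ⟨rfl, rfl⟩ <;>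
      rcases hx' with hx' | ⟨rfl, h⟩ | ⟨rfl, h⟩
    all_goals first
      | rfl | omega | exact hS.eq_of_mem_of_mem hx hx'
      | exact absurd (h ▸ hx) (hS.natCast_add_one_notMem _)
      | exact absurd (h ▸ hx) (hS.neg_natCast_add_one_notMem _)
      | exact absurd hx' (hS.natCast_add_one_notMem _)
      | exact absurd hx' (hS.neg_natCast_add_one_notMem _)
  · rcases mem_insertPair.1 hx with hx | ⟨-, rfl⟩ | ⟨-, rfl⟩
    · exact angleB_subset_succ (hS.subset_angleB j hx)
    · exact mem_angleB_succ.2 (Or.inr (Or.inl rfl))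
    · exact mem_angleB_succ.2 (Or.inr (Or.inr rfl))
  · rcases mem_angleB_succ.1 hx with hx | hx | hx
    · obtain ⟨j, hj⟩ := hS.exists_mem hx
      exact ⟨j, subset_insertPair hj⟩
    · exact ⟨i, mem_insertPair.2 (Or.inr (Or.inl ⟨rfl, hx⟩))⟩
    · exact ⟨pairIdx k i, mem_insertPair.2 (Or.inr (Or.inr ⟨rfl, hx⟩))⟩
  · rw [mem_insertPair] at hx ⊢
    rcases hx with hx | ⟨rfl, rfl⟩ | ⟨rfl, rfl⟩
    · exact Or.inl (hS.neg_mem_pairIdx hx)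
    · exact Or.inr (Or.inr ⟨rfl, rfl⟩)
    · exact Or.inr (Or.inl ⟨pairIdx_pairIdx i, neg_neg _⟩)

theorem isStandardB_insertPair (hS : IsStandardB n k S) (i : Fin (2*k+1)) :
    IsStandardB (n + 1) k (insertPair n k i S) := by
  refine ⟨isOrderedB_insertPair hS.1 i, fun l hl h => ?_, fun l h => ?_⟩
  · rw [mB_insertPair hS.1]
    exact subset_insertPair (hS.2.1 l hl h)
  · simpa only [mB_insertPair hS.1] using hS.2.2 l h

theorem invSet_insertPair (hS : IsOrderedB n k S) (i : Fin (2*k+1)) :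
    invSet (insertPair n k i S) = invSet S ∪ (fun j => ((n + 1 : ℤ), j)) '' Set.Ioi i := by
  ext ⟨s, j⟩
  simp only [invSet, mB_insertPair hS, Set.mem_ofPred_eq, Set.mem_union, Set.mem_image,
    Set.mem_Ioi, Prod.mk.injEq, mem_insertPair]
  constructor
  · rintro ⟨⟨i', hi'j, hs | ⟨rfl, rfl⟩ | ⟨-, rfl⟩⟩, hm⟩
    · exact Or.inl ⟨⟨i', hi'j, hs⟩, hm⟩
    · exact Or.inr ⟨j, hi'j, rfl, rfl⟩
    · linarith [mB_nonneg S j]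
  · rintro (⟨⟨i', hi'j, hs⟩, hm⟩ | ⟨j, hij, rfl, rfl⟩)
    · exact ⟨⟨i', hi'j, Or.inl hs⟩, hm⟩
    · exact ⟨⟨i, hij, Or.inr (Or.inl ⟨rfl, rfl⟩)⟩, by linarith [hS.mB_le j]⟩

theorem invB_insertPair (hS : IsOrderedB n k S) (i : Fin (2*k+1)) :
    invB (insertPair n k i S) = invB S + (2*k - i) := by
  have hdisj : Disjoint (invSet S) ((fun j => ((n + 1 : ℤ), j)) '' Set.Ioi i) := by
    rw [Set.disjoint_left]
    rintro p ⟨⟨i', -, hi'⟩, -⟩ ⟨j, -, rfl⟩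
    exact hS.natCast_add_one_notMem i' hi'
  rw [invB_eq_ncard_invSet, invB_eq_ncard_invSet, invSet_insertPair hS,
    Set.ncard_union_eq hdisj (invSet_finite S) (Set.toFinite _),
    Set.ncard_image_of_injective _ fun a b h => (Prod.mk.inj h).2, ← coe_Ioi,
    Set.ncard_coe_finset, Fin.card_Ioi]
  omega

end insertPair

def snocPair (n k : ℕ) (S : Fin (2*k+1) → Finset ℤ) : Fin (2*(k+1)+1) → Finset ℤ :=
  fun j => if h : j.val < 2*k+1 then S ⟨j.val, h⟩
    else if j.val = 2*k+1 then {-(n + 1 : ℤ)} else {(n + 1 : ℤ)}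

section snocPair

variable {n k : ℕ} {S : Fin (2*k+1) → Finset ℤ} {j : Fin (2*(k+1)+1)} {x : ℤ}

theorem snocPair_of_lt (h : j.val < 2*k+1) : snocPair n k S j = S ⟨j.val, h⟩ := dif_pos h

theorem snocPair_of_eq_odd (h : j.val = 2*k+1) : snocPair n k S j = {-(n + 1 : ℤ)} := by
  rw [snocPair, dif_neg (by omega), if_pos h]

theorem snocPair_of_eq_last (h : j.val = 2*k+2) : snocPair n k S j = {(n + 1 : ℤ)} := by
  rw [snocPair, dif_neg (by omega), if_neg (by omega)]

theorem snocPair_castLE (h : 2*k+1 ≤ 2*(k+1)+1) (i : Fin (2*k+1)) :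
    snocPair n k S (Fin.castLE h i) = S i :=
  snocPair_of_lt i.isLt

theorem mem_snocPair :
    x ∈ snocPair n k S j ↔ (∃ h : j.val < 2*k+1, x ∈ S ⟨j.val, h⟩) ∨
      (j.val = 2*k+1 ∧ x = -(n + 1)) ∨ (j.val = 2*k+2 ∧ x = n + 1) := by
  rcases (by omega : j.val < 2*k+1 ∨ j.val = 2*k+1 ∨ j.val = 2*k+2) with h | h | h
  · rw [snocPair_of_lt h]
    refine ⟨fun hx => Or.inl ⟨h, hx⟩, ?_⟩
    rintro (⟨_, hx⟩ | ⟨h', -⟩ | ⟨h', -⟩)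
    · exact hx
    all_goals omega
  · simp [snocPair_of_eq_odd h, h]
  · simp [snocPair_of_eq_last h, h]

theorem mB_snocPair_of_lt (h : j.val < 2*k+1) : mB (snocPair n k S) j = mB S ⟨j.val, h⟩ := by
  rw [mB_eq_minAbs, mB_eq_minAbs, snocPair_of_lt h]

theorem mB_snocPair_castLE (h : 2*k+1 ≤ 2*(k+1)+1) (i : Fin (2*k+1)) :
    mB (snocPair n k S) (Fin.castLE h i) = mB S i := by
  rw [mB_eq_minAbs, mB_eq_minAbs, snocPair_castLE]

theorem mB_snocPair_of_le (h : 2*k+1 ≤ j.val) : mB (snocPair n k S) j = n + 1 := by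
  rw [mB_eq_minAbs]
  rcases (by omega : j.val = 2*k+1 ∨ j.val = 2*k+2) with h | h
  · rw [snocPair_of_eq_odd h, minAbs_singleton, abs_neg, abs_of_nonneg (by positivity)]
  · rw [snocPair_of_eq_last h, minAbs_singleton, abs_of_nonneg (by positivity)]

theorem neg_mem_snocPair_pairIdx (hS : IsOrderedB n k S) (hx : x ∈ snocPair n k S j) :
    -x ∈ snocPair n k S (pairIdx (k + 1) j) := by
  rw [mem_snocPair] at hx ⊢
  rcases hx with ⟨h, hx⟩ | ⟨h, rfl⟩ | ⟨h, rfl⟩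
  · have hp := val_pairIdx_congr (k' := k) (i := j) (i' := ⟨j.val, h⟩) rfl
    refine Or.inl ⟨hp ▸ (pairIdx k _).isLt, ?_⟩
    convert hS.neg_mem_pairIdx hx using 2
    exact Fin.ext hp
  · exact Or.inr (Or.inr ⟨by rcases pairIdx_cases j with h' | h' | h' <;> omega, neg_neg _⟩)
  · exact Or.inr (Or.inl ⟨by rcases pairIdx_cases j with h' | h' | h' <;> omega, rfl⟩)

theorem isOrderedB_snocPair (hS : IsOrderedB n k S) :
    IsOrderedB (n + 1) (k + 1) (snocPair n k S) := by
  refine isOrderedB_of_forall_mem (fun j => ?_) (fun j j' x hx hx' => ?_) (fun j x hx => ?_)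
    (fun x hx => ?_) ?_ fun j x => neg_mem_snocPair_pairIdx hS
  · rcases (by omega : j.val < 2*k+1 ∨ j.val = 2*k+1 ∨ j.val = 2*k+2) with h | h | h
    · exact snocPair_of_lt h ▸ hS.nonempty _
    · simp [snocPair_of_eq_odd h]
    · simp [snocPair_of_eq_last h]
  · rw [mem_snocPair] at hx hx'
    ext
    rcases hx with ⟨h, hx⟩ | ⟨h, rfl⟩ | ⟨h, rfl⟩ <;>
      rcases hx' with ⟨h', hx'⟩ | ⟨h', hx'⟩ | ⟨h', hx'⟩
    all_goals first
      | omega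
      | exact Fin.mk.inj_iff.1 (hS.eq_of_mem_of_mem hx hx')
      | (subst hx'; exact absurd hx (hS.natCast_add_one_notMem _))
      | (subst hx'; exact absurd hx (hS.neg_natCast_add_one_notMem _))
      | exact absurd hx' (hS.natCast_add_one_notMem _)
      | exact absurd hx' (hS.neg_natCast_add_one_notMem _)
  · rcases mem_snocPair.1 hx with ⟨h, hx⟩ | ⟨-, rfl⟩ | ⟨-, rfl⟩
    · exact angleB_subset_succ (hS.subset_angleB _ hx)
    · exact mem_angleB_succ.2 (Or.inr (Or.inr rfl))
    · exact mem_angleB_succ.2 (Or.inr (Or.inl rfl))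
  · rcases mem_angleB_succ.1 hx with hx | rfl | rfl
    · obtain ⟨j, hj⟩ := hS.exists_mem hx
      exact ⟨Fin.castLE (by omega) j, mem_snocPair.2 (Or.inl ⟨j.isLt, hj⟩)⟩
    · exact ⟨⟨2*k+2, by omega⟩, mem_snocPair.2 (Or.inr (Or.inr ⟨rfl, rfl⟩))⟩
    · exact ⟨⟨2*k+1, by omega⟩, mem_snocPair.2 (Or.inr (Or.inl ⟨rfl, rfl⟩))⟩
  · exact (snocPair_of_lt (j := 0) (by simp)) ▸ hS.zero_mem

theorem isStandardB_snocPair (hS : IsStandardB n k S) :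
    IsStandardB (n + 1) (k + 1) (snocPair n k S) := by
  refine ⟨isOrderedB_snocPair hS.1, fun l hl h => ?_, fun l h => ?_⟩
  · rcases (by omega : 2*l < 2*k+1 ∨ 2*l = 2*k+2) with hc | hc
    · rw [mB_snocPair_of_lt (j := ⟨2*l, h⟩) hc, snocPair_of_lt (j := ⟨2*l, h⟩) hc]
      exact hS.2.1 l hl hc
    · rw [mB_snocPair_of_le (j := ⟨2*l, h⟩) (by simp only; omega), snocPair_of_eq_last hc]
      exact mem_singleton_self _
  · rw [mB_snocPair_of_lt (j := ⟨2*l, by omega⟩) (by simp only; omega)]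
    rcases (by omega : 2*(l+1) < 2*k+1 ∨ 2*(l+1) = 2*k+2) with hc | hc
    · rw [mB_snocPair_of_lt (j := ⟨2*(l+1), h⟩) hc]
      exact hS.2.2 l hc
    · rw [mB_snocPair_of_le (j := ⟨2*(l+1), h⟩) (by simp only; omega)]
      linarith [hS.1.mB_le ⟨2*l, by omega⟩]

theorem invSet_snocPair (hS : IsOrderedB n k S) :
    invSet (snocPair n k S) = Prod.map id (Fin.castLE (by omega)) '' invSet S := by
  ext ⟨s, j⟩
  constructor
  · rintro ⟨⟨i, hij, hs⟩, hm⟩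
    dsimp only at hij hs hm
    have hj : j.val < 2*k+1 := by
      by_contra hj
      rw [mB_snocPair_of_le (by omega)] at hm
      rcases mem_snocPair.1 hs with ⟨hi, hs⟩ | ⟨-, rfl⟩ | ⟨hi, -⟩
      · linarith [mem_angleB.1 (hS.subset_angleB _ hs), le_abs_self s]
      · omega
      · exact absurd hij (by rw [Fin.lt_def]; omega)
    have hi : i.val < 2*k+1 := lt_trans hij hj
    rw [snocPair_of_lt hi] at hs
    rw [mB_snocPair_of_lt hj] at hm
    exact ⟨(s, ⟨j.val, hj⟩), ⟨⟨⟨i.val, hi⟩, hij, hs⟩, hm⟩, rfl⟩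
  · rintro ⟨⟨s, j⟩, ⟨⟨i, hij, hs⟩, hm⟩, he⟩
    simp only [Prod.map, id, Prod.mk.injEq] at he
    obtain ⟨rfl, rfl⟩ := he
    refine ⟨⟨Fin.castLE (by omega) i, hij, ?_⟩, ?_⟩
    · rwa [snocPair_castLE]
    · rwa [mB_snocPair_castLE]

theorem invB_snocPair (hS : IsOrderedB n k S) : invB (snocPair n k S) = invB S := by
  rw [invB_eq_ncard_invSet, invB_eq_ncard_invSet, invSet_snocPair hS,
    Set.ncard_image_of_injective _
      (Prod.map_injective.2 ⟨Function.injective_id, Fin.castLE_injective _⟩)]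

end snocPair

noncomputable def restrictB (n : ℕ) {m : ℕ} (T : Fin m → Finset ℤ) : Fin m → Finset ℤ :=
  fun j => T j ∩ angleB n

section restrictB

variable {n k : ℕ} {T : Fin (2*k+1) → Finset ℤ} {j : Fin (2*k+1)}

theorem restrictB_insertPair {S : Fin (2*k+1) → Finset ℤ} (hS : IsOrderedB n k S)
    (i : Fin (2*k+1)) : restrictB n (insertPair n k i S) = S := by
  funext j
  ext x
  simp only [restrictB, mem_inter, mem_insertPair]
  constructor
  · rintro ⟨hx | ⟨-, rfl⟩ | ⟨-, rfl⟩, hxn⟩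
    · exact hx
    · exact absurd hxn natCast_add_one_notMem_angleB
    · exact absurd hxn neg_natCast_add_one_notMem_angleB
  · exact fun hx => ⟨Or.inl hx, hS.subset_angleB j hx⟩

theorem IsOrderedB.mB_le_of_ne (hT : IsOrderedB (n + 1) k T) (hj : (n + 1 : ℤ) ∈ T j)
    (hm : mB T j ≠ n + 1) (i : Fin (2*k+1)) : mB T i ≤ n := by
  obtain ⟨x, hx, hxe⟩ := exists_mem_abs_eq_minAbs (hT.nonempty i)
  rw [mB_eq_minAbs, ← hxe]
  rcases mem_angleB_succ.1 (hT.subset_angleB i hx) with hxn | rfl | rfl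
  · exact mem_angleB.1 hxn
  · obtain rfl := hT.eq_of_mem_of_mem hx hj
    exact absurd (hxe.symm.trans (abs_of_nonneg (by positivity))) hm
  · have hi : pairIdx k i = j := hT.eq_of_mem_of_mem (by simpa using hT.neg_mem_pairIdx hx) hj
    rw [← hi, hT.mB_pairIdx, mB_eq_minAbs, ← hxe, abs_neg, abs_of_nonneg (by positivity)] at hm
    exact absurd rfl hm

theorem mB_restrictB (hT : IsOrderedB (n + 1) k T) (hle : ∀ i, mB T i ≤ n) (i : Fin (2*k+1)) :
    mB (restrictB n T) i = mB T i :=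
  minAbs_inter_angleB (hT.nonempty i) (hle i)

theorem isStandardB_restrictB (hT : IsStandardB (n + 1) k T) (hle : ∀ i, mB T i ≤ n) :
    IsStandardB n k (restrictB n T) := by
  have hord : IsOrderedB n k (restrictB n T) := by
    refine isOrderedB_of_forall_mem (fun i => ?_)
      (fun i i' x hx hx' => hT.1.eq_of_mem_of_mem (mem_inter.1 hx).1 (mem_inter.1 hx').1)
      (fun i => inter_subset_right) (fun x hx => ?_)
      (mem_inter.2 ⟨hT.1.zero_mem, zero_mem_angleB⟩) (fun i x hx => ?_)
    · obtain ⟨x, hx, hxe⟩ := exists_mem_abs_eq_minAbs (hT.1.nonempty i)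
      exact ⟨x, mem_inter.2 ⟨hx, mem_angleB.2 (hxe ▸ hle i)⟩⟩
    · obtain ⟨i, hi⟩ := hT.1.exists_mem (angleB_subset_succ hx)
      exact ⟨i, mem_inter.2 ⟨hi, hx⟩⟩
    · obtain ⟨hx, hxn⟩ := mem_inter.1 hx
      exact mem_inter.2 ⟨hT.1.neg_mem_pairIdx hx, neg_mem_angleB.2 hxn⟩
  refine ⟨hord, fun l hl h => ?_, fun l h => ?_⟩
  · rw [mB_restrictB hT.1 hle]
    refine mem_inter.2 ⟨hT.2.1 l hl h, mem_angleB.2 ?_⟩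
    rw [abs_of_nonneg (mB_nonneg _ _)]
    exact hle _
  · simpa only [mB_restrictB hT.1 hle] using hT.2.2 l h

theorem IsOrderedB.eq_insertPair_restrictB (hT : IsOrderedB (n + 1) k T)
    (hj : (n + 1 : ℤ) ∈ T j) : T = insertPair n k j (restrictB n T) := by
  funext i
  ext x
  simp only [mem_insertPair, restrictB, mem_inter]
  constructor
  · intro hx
    rcases mem_angleB_succ.1 (hT.subset_angleB i hx) with hxn | rfl | rfl
    · exact Or.inl ⟨hx, hxn⟩
    · exact Or.inr (Or.inl ⟨hT.eq_of_mem_of_mem hx hj, rfl⟩)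
    · refine Or.inr (Or.inr ⟨?_, rfl⟩)
      rw [← hT.eq_of_mem_of_mem (by simpa using hT.neg_mem_pairIdx hx) hj, pairIdx_pairIdx]
  · rintro (⟨hx, -⟩ | ⟨rfl, rfl⟩ | ⟨rfl, rfl⟩)
    · exact hx
    · exact hj
    · exact hT.neg_mem_pairIdx hj

end restrictB

def dropLastPair {k : ℕ} (T : Fin (2*(k+1)+1) → Finset ℤ) : Fin (2*k+1) → Finset ℤ :=
  fun j => T (Fin.castLE (by omega) j)

theorem dropLastPair_snocPair (n : ℕ) {k : ℕ} (S : Fin (2*k+1) → Finset ℤ) :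
    dropLastPair (snocPair n k S) = S :=
  funext (snocPair_castLE _)

section dropLastPair

variable {n k : ℕ} {T : Fin (2*(k+1)+1) → Finset ℤ} {j : Fin (2*(k+1)+1)}

theorem IsStandardB.eq_last_of_mB_eq (hT : IsStandardB (n + 1) (k + 1) T)
    (hj : (n + 1 : ℤ) ∈ T j) (hm : mB T j = n + 1) : j = Fin.last _ := by
  have hN : ∀ i, mB T i ≤ n + 1 := by exact_mod_cast hT.1.mB_le
  ext
  rcases pairIdx_cases j with ⟨h0, -⟩ | ⟨hodd, hp⟩ | ⟨-, heven, -⟩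
  · obtain rfl : j = 0 := Fin.ext h0
    rw [mB_eq_minAbs, minAbs_eq_zero_of_zero_mem hT.1.zero_mem] at hm
    omega
  · have hl : 1 ≤ (j.val + 1) / 2 := by omega
    have h2l : 2 * ((j.val + 1) / 2) < 2*(k+1)+1 := by omega
    have hpj : (⟨_, h2l⟩ : Fin (2*(k+1)+1)) = pairIdx (k + 1) j :=
      Fin.ext (by simp only; omega)
    have hmem := hT.2.1 _ hl h2l
    rw [hpj, hT.1.mB_pairIdx, hm] at hmem
    have := congrArg Fin.val (hT.1.eq_of_mem_of_mem hmem hj)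
    omega
  · by_contra hne
    have h2l : 2 * (j.val / 2 + 1) < 2*(k+1)+1 := by simp only [Fin.val_last] at hne; omega
    have hlt := hT.2.2 (j.val / 2) h2l
    have hj2 : (⟨2 * (j.val / 2), by omega⟩ : Fin (2*(k+1)+1)) = j :=
      Fin.ext (by simp only; omega)
    rw [hj2, hm] at hlt
    linarith [hN ⟨_, h2l⟩]

theorem IsOrderedB.eq_singleton_last (hT : IsOrderedB (n + 1) (k + 1) T)
    (hN : (n + 1 : ℤ) ∈ T (Fin.last _)) (hm : mB T (Fin.last _) = n + 1) :
    T (Fin.last _) = {(n + 1 : ℤ)} := by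
  refine eq_singleton_iff_unique_mem.2 ⟨hN, fun x hx => ?_⟩
  have hle := minAbs_le_abs hx
  rw [← mB_eq_minAbs, hm] at hle
  rcases mem_angleB_succ.1 (hT.subset_angleB _ hx) with hxn | rfl | rfl
  · linarith [mem_angleB.1 hxn]
  · rfl
  · have := hT.eq_of_mem_of_mem (by simpa using hT.neg_mem_pairIdx hx) hN
    exact absurd this (pairIdx_ne_self (Fin.ext_iff.not.2 (by simp)))

theorem IsOrderedB.eq_singleton_of_last_eq (hT : IsOrderedB (n + 1) (k + 1) T)
    (hlast : T (Fin.last _) = {(n + 1 : ℤ)}) : T ⟨2*k+1, by omega⟩ = {-(n + 1 : ℤ)} := by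
  have hp : pairIdx (k + 1) ⟨2*k+1, by omega⟩ = Fin.last _ := by
    ext
    rcases pairIdx_cases (k := k + 1) ⟨2*k+1, by omega⟩ with h | h | h <;>
      (simp only [Fin.val_last] at h ⊢; omega)
  refine eq_singleton_iff_unique_mem.2 ⟨?_, fun x hx => ?_⟩
  · have hN : (n + 1 : ℤ) ∈ T (Fin.last _) := hlast ▸ mem_singleton_self _
    simpa only [← hp, pairIdx_pairIdx] using hT.neg_mem_pairIdx hN
  · have := hT.neg_mem_pairIdx hx
    rw [hp, hlast, mem_singleton] at this
    omega

theorem IsOrderedB.eq_snocPair_dropLastPair (hT : IsOrderedB (n + 1) (k + 1) T)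
    (hlast : T (Fin.last _) = {(n + 1 : ℤ)}) : T = snocPair n k (dropLastPair T) := by
  funext j
  rcases (by omega : j.val < 2*k+1 ∨ j.val = 2*k+1 ∨ j.val = 2*k+2) with h | h | h
  · rw [snocPair_of_lt h]
    rfl
  · rw [snocPair_of_eq_odd h, ← hT.eq_singleton_of_last_eq hlast]
    exact congrArg T (Fin.ext h)
  · rw [snocPair_of_eq_last h, ← hlast]
    exact congrArg T (Fin.ext h)

theorem isStandardB_dropLastPair (hT : IsStandardB (n + 1) (k + 1) T)
    (hlast : T (Fin.last _) = {(n + 1 : ℤ)}) : IsStandardB n k (dropLastPair T) := by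
  have hsnoc := hT.1.eq_snocPair_dropLastPair hlast
  have hodd := hT.1.eq_singleton_of_last_eq hlast
  have hord := hT.1
  obtain ⟨⟨hne, hdisj, -, h0, hneg, hpair⟩, hmem, hmono⟩ := hT
  refine ⟨⟨fun i => hne _, fun i j hij => hdisj _ _ ((Fin.castLE_injective _).ne hij), ?_,
    h0, hneg, fun l hl h => hpair l hl (by omega)⟩, fun l hl h => hmem l hl (by omega),
    fun l h => hmono l (by omega)⟩
  ext x
  simp only [mem_biUnion, mem_univ, true_and]
  constructor
  · rintro ⟨i, hi⟩
    rcases mem_angleB_succ.1 (hord.subset_angleB _ hi) with hx | rfl | rfl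
    · exact hx
    · have := hord.eq_of_mem_of_mem hi (hlast ▸ mem_singleton_self _)
      simp only [Fin.ext_iff, Fin.val_castLE, Fin.val_last] at this
      omega
    · have := hord.eq_of_mem_of_mem hi (hodd ▸ mem_singleton_self _)
      simp only [Fin.ext_iff, Fin.val_castLE] at this
      omega
  · intro hx
    obtain ⟨j, hj⟩ := hord.exists_mem (angleB_subset_succ hx)
    rw [hsnoc, mem_snocPair] at hj
    rcases hj with ⟨h, hj⟩ | ⟨-, rfl⟩ | ⟨-, rfl⟩
    · exact ⟨⟨j, h⟩, hj⟩
    · exact absurd hx neg_natCast_add_one_notMem_angleB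
    · exact absurd hx natCast_add_one_notMem_angleB

end dropLastPair

theorem IsStandardB.eq_snocPair_or_eq_insertPair {n k : ℕ} {T : Fin (2*(k+1)+1) → Finset ℤ}
    (hT : IsStandardB (n + 1) (k + 1) T) :
    (∃ S, IsStandardB n k S ∧ T = snocPair n k S) ∨
      ∃ i S, IsStandardB n (k + 1) S ∧ T = insertPair n (k + 1) i S := by
  obtain ⟨j, hj⟩ := hT.1.exists_mem (mem_angleB_succ.2 (Or.inr (Or.inl rfl)))
  by_cases hm : mB T j = n + 1
  · obtain rfl := hT.eq_last_of_mB_eq hj hm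
    have hlast := hT.1.eq_singleton_last hj hm
    exact Or.inl ⟨_, isStandardB_dropLastPair hT hlast, hT.1.eq_snocPair_dropLastPair hlast⟩
  · exact Or.inr ⟨j, _, isStandardB_restrictB hT (hT.1.mB_le_of_ne hj hm),
      hT.1.eq_insertPair_restrictB hj⟩

def standardSet (n k : ℕ) : Set (Fin (2*k+1) → Finset ℤ) := {S | IsStandardB n k S}

noncomputable def invPolyB (n k : ℕ) : ℤ[X] := ∑ᶠ S ∈ standardSet n k, X ^ invB S

theorem standardSet_finite (n k : ℕ) : (standardSet n k).Finite := by
  refine (Set.Finite.pi fun _ => (angleB n).powerset.finite_toSet).subset fun S hS => ?_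
  simpa [Set.mem_pi, mem_powerset] using hS.1.subset_angleB

theorem standardSet_succ_succ (n k : ℕ) :
    standardSet (n + 1) (k + 1) =
      snocPair n k '' standardSet n k ∪
        ⋃ i, insertPair n (k + 1) i '' standardSet n (k + 1) := by
  ext T
  constructor
  · intro hT
    rcases IsStandardB.eq_snocPair_or_eq_insertPair hT with ⟨S, hS, rfl⟩ | ⟨i, S, hS, rfl⟩
    · exact Or.inl ⟨S, hS, rfl⟩
    · exact Or.inr (Set.mem_iUnion.2 ⟨i, S, hS, rfl⟩)
  · rintro (⟨S, hS, rfl⟩ | hT)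
    · exact isStandardB_snocPair hS
    · obtain ⟨i, S, hS, rfl⟩ := Set.mem_iUnion.1 hT
      exact isStandardB_insertPair hS i

theorem disjoint_image_snocPair_iUnion_image_insertPair (n k : ℕ) :
    Disjoint (snocPair n k '' standardSet n k)
      (⋃ i, insertPair n (k + 1) i '' standardSet n (k + 1)) := by
  rw [Set.disjoint_left]
  rintro _ ⟨S, hS, rfl⟩ hT
  obtain ⟨i, S', hS', heq⟩ := Set.mem_iUnion.1 hT
  have h := congrArg (mB · (Fin.last _)) heq
  simp only [mB_insertPair hS'.1, mB_snocPair_of_le (j := Fin.last _) (by simp)] at h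
  linarith [hS'.1.mB_le (Fin.last _)]

theorem pairwise_disjoint_image_insertPair (n k : ℕ) :
    Pairwise (Function.onFun Disjoint fun i => insertPair n k i '' standardSet n k) := by
  intro i i' hii'
  rw [Function.onFun, Set.disjoint_left]
  rintro _ ⟨S, hS, rfl⟩ ⟨S', hS', heq⟩
  have h : (n + 1 : ℤ) ∈ insertPair n k i' S' i :=
    heq ▸ (natCast_add_one_mem_insertPair_iff hS.1).2 rfl
  exact hii' ((natCast_add_one_mem_insertPair_iff hS'.1).1 h)

theorem finsum_image_snocPair (n k : ℕ) :
    ∑ᶠ T ∈ snocPair n k '' standardSet n k, (X : ℤ[X]) ^ invB T = invPolyB n k := by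
  rw [finsum_mem_image fun S _ S' _ h => by
    rw [← dropLastPair_snocPair n S, h, dropLastPair_snocPair]]
  exact finsum_mem_congr rfl fun S hS => by rw [invB_snocPair hS.1]

theorem finsum_image_insertPair (n k : ℕ) (i : Fin (2*k+1)) :
    ∑ᶠ T ∈ insertPair n k i '' standardSet n k, (X : ℤ[X]) ^ invB T =
      X ^ (2*k - i.val) * invPolyB n k := by
  rw [finsum_mem_image fun S hS S' hS' h => by
    rw [← restrictB_insertPair hS.1 i, h, restrictB_insertPair hS'.1]]
  rw [invPolyB, finsum_mem_eq_finite_toFinset_sum _ (standardSet_finite n k),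
    finsum_mem_eq_finite_toFinset_sum _ (standardSet_finite n k), mul_sum]
  exact sum_congr rfl fun S hS => by
    rw [invB_insertPair ((standardSet_finite n k).mem_toFinset.1 hS).1, pow_add, mul_comm]

theorem sum_X_pow_sub_eq_qb (m : ℕ) :
    ∑ i : Fin (m + 1), (X : ℤ[X]) ^ (m - i.val) = qb (m + 1) := by
  rw [Fin.sum_univ_eq_sum_range (fun t => (X : ℤ[X]) ^ (m - t)), qb,
    ← sum_range_reflect (fun t => (X : ℤ[X]) ^ t) (m + 1)]
  rfl

theorem invPolyB_succ_succ (n k : ℕ) :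
    invPolyB (n + 1) (k + 1) = invPolyB n k + qb (2*(k+1)+1) * invPolyB n (k + 1) := by
  have hfin := standardSet_finite
  rw [invPolyB, standardSet_succ_succ,
    finsum_mem_union (disjoint_image_snocPair_iUnion_image_insertPair n k) ((hfin n k).image _)
      (Set.finite_iUnion fun i => (hfin n (k + 1)).image _),
    finsum_mem_iUnion (pairwise_disjoint_image_insertPair n (k + 1))
      fun i => (hfin n (k + 1)).image _,
    finsum_image_snocPair, finsum_eq_sum_of_fintype]
  simp only [finsum_image_insertPair, ← sum_mul, sum_X_pow_sub_eq_qb]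

theorem standardSet_zero_right (n : ℕ) : standardSet n 0 = {fun _ => angleB n} := by
  have : Subsingleton (Fin (2*0+1)) := inferInstanceAs (Subsingleton (Fin 1))
  ext S
  simp only [standardSet, Set.mem_ofPred_eq, Set.mem_singleton_iff]
  constructor
  · intro hS
    funext j
    obtain rfl : j = 0 := Subsingleton.elim _ _
    exact (hS.1.subset_angleB 0).antisymm fun x hx => by
      obtain ⟨i, hi⟩ := hS.1.exists_mem hx
      rwa [Subsingleton.elim i 0] at hi
  · rintro rfl
    refine ⟨isOrderedB_of_forall_mem (fun _ => ⟨0, zero_mem_angleB⟩)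
      (fun i j _ _ _ => Subsingleton.elim i j) (fun _ => subset_rfl) (fun x hx => ⟨0, hx⟩)
      zero_mem_angleB fun _ _ hx => neg_mem_angleB.2 hx, ?_, ?_⟩ <;> intros <;> omega

theorem standardSet_zero_succ (k : ℕ) : standardSet 0 (k + 1) = ∅ := by
  refine Set.eq_empty_of_forall_notMem fun S hS => ?_
  obtain ⟨x, hx⟩ := hS.1.nonempty 1
  have hx0 : x = 0 := abs_nonpos_iff.1 (by exact_mod_cast mem_angleB.1 (hS.1.subset_angleB 1 hx))
  have := hS.1.eq_of_mem_of_mem hS.1.zero_mem (hx0 ▸ hx)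
  simp at this

theorem invPolyB_zero_right (n : ℕ) : invPolyB n 0 = 1 := by
  rw [invPolyB, standardSet_zero_right, finsum_mem_singleton, invB_eq_zero_of_le_one le_rfl,
    pow_zero]

theorem invPolyB_zero_succ (k : ℕ) : invPolyB 0 (k + 1) = 0 := by
  rw [invPolyB, standardSet_zero_succ, finsum_mem_empty]

/-- S_B[n,k] = Σ_{ρ standard} q^{inv ρ}. -/
theorem stmt2 (n k : ℕ) :
    qStirB n k =
      ∑ᶠ S ∈ {S : Fin (2*k+1) → Finset ℤ | IsStandardB n k S},
        (Polynomial.X : Polynomial ℤ) ^ invB S := by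
  change qStirB n k = invPolyB n k
  induction n generalizing k with
  | zero => cases k with
    | zero => rw [invPolyB_zero_right]; rfl
    | succ k => rw [invPolyB_zero_succ]; rfl
  | succ n ih => cases k with
    | zero => rw [qStirB, ih, invPolyB_zero_right, invPolyB_zero_right]
    | succ k => rw [qStirB, ih, ih, invPolyB_succ_succ]
end

section
/- The statistics rob_B and rcs_B are equidistributed over ordered type B partitions of ⟨n⟩ with 2k+1 blocks: the complement map π ↦ π^c satisfies rcs_B(π^c) = rob_B(π) for every ordered type B partition π. -/
open Finset Polynomial

/-! On the nonzero elements of ⟨n⟩ the complement preserves signs and sends `|x|` to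
`n + 1 - |x|`; it is an involution of ⟨n⟩. A block `S_j` preceded by another block does not
contain `0`, so complementing it turns its least absolute value `m_j` into the greatest one,
`M_j(π^c) = n + 1 - m_j`. Hence `(s, S_j) ↦ (s^c, S_j^c)` maps the pairs counted by `rob_B(π)`
(`0 < s ≤ m_j`) bijectively onto those counted by `rcs_B(π^c)` (`s^c ≥ n + 1 - m_j`). -/

section complB

variable {n : ℕ} {x : ℤ}

lemma abs_complB (hx : |x| ≤ n) (hx0 : x ≠ 0) : |complB n x| = n + 1 - |x| := by
  unfold complB; split_ifs <;> cases abs_cases x <;> cases abs_cases (n + 1 - x) <;>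
    cases abs_cases (-(n + 1 : ℤ) - x) <;> omega

lemma complB_complB (hx : |x| ≤ n) : complB n (complB n x) = x := by
  unfold complB; split_ifs <;> cases abs_cases x <;> omega

lemma complB_injOn : Set.InjOn (complB n) {x | |x| ≤ n} := fun x hx y hy hxy => by
  rw [← complB_complB hx, hxy, complB_complB hy]

lemma le_complB_iff (hx : |x| ≤ n) {a : ℤ} (ha : a ≤ n) :
    n + 1 - a ≤ complB n x ↔ 0 < x ∧ x ≤ a := by
  unfold complB; split_ifs <;> cases abs_cases x <;> omega

end complB

section extremes

variable {m : ℕ} (S : Fin m → Finset ℤ) (j : Fin m)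

lemma mB_eq_min' (h : (S j).Nonempty) : mB S j = ((S j).image abs).min' (h.image _) := by
  rw [mB, ← Finset.coe_min', WithTop.untopD_coe]

lemma MB_eq_max' (h : (S j).Nonempty) : MB S j = ((S j).image abs).max' (h.image _) := by
  rw [MB, ← Finset.coe_max', WithBot.unbotD_coe]

lemma exists_abs_eq_mB (h : (S j).Nonempty) : ∃ x ∈ S j, |x| = mB S j := by
  simpa [mB_eq_min' S j h] using Finset.min'_mem _ (h.image abs)

lemma mB_le_abs {x : ℤ} (hx : x ∈ S j) : mB S j ≤ |x| := by
  rw [mB_eq_min' S j ⟨x, hx⟩]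
  exact Finset.min'_le _ _ (Finset.mem_image_of_mem _ hx)

lemma mB_le_of_forall_abs_le {n : ℕ} (h : (S j).Nonempty) (hn : ∀ x ∈ S j, |x| ≤ n) :
    mB S j ≤ n := by
  obtain ⟨x, hx, hxm⟩ := exists_abs_eq_mB S j h
  exact hxm ▸ hn x hx

lemma MB_complP {n : ℕ} (h : (S j).Nonempty) (hn : ∀ x ∈ S j, |x| ≤ n) (h0 : 0 ∉ S j) :
    MB (complP n S) j = n + 1 - mB S j := by
  have habs : ∀ x ∈ S j, |complB n x| = n + 1 - |x| := fun x hx =>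
    abs_complB (hn x hx) (ne_of_mem_of_not_mem hx h0)
  rw [MB_eq_max' _ _ (h.image _)]
  refine (Finset.isGreatest_max' _ _).unique ⟨?_, ?_⟩
  · obtain ⟨x, hx, hxm⟩ := exists_abs_eq_mB S j h
    simp only [complP, Finset.image_image, Finset.mem_coe, Finset.mem_image, Function.comp_apply]
    exact ⟨x, hx, by rw [habs x hx, hxm]⟩
  · rintro _ hy
    simp only [complP, Finset.image_image, Finset.mem_coe, Finset.mem_image,
      Function.comp_apply] at hy
    obtain ⟨x, hx, rfl⟩ := hy
    have := mB_le_abs S j hx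
    rw [habs x hx]
    omega

end extremes

theorem rcsB_complP_eq_robB {m n : ℕ} (S : Fin m → Finset ℤ) (hne : ∀ j, (S j).Nonempty)
    (hn : ∀ j, ∀ x ∈ S j, |x| ≤ n) (h0 : ∀ i j, i < j → 0 ∉ S j) :
    rcsB (complP n S) = robB S := by
  have hcompl : ∀ i j s, i < j → s ∈ S i →
      (MB (complP n S) j ≤ complB n s ↔ 0 < s ∧ s ≤ mB S j) := fun i j s hij hs => by
    rw [MB_complP S j (hne j) (hn j) (h0 i j hij)]
    exact le_complB_iff (hn i s hs) (mB_le_of_forall_abs_le S j (hne j) (hn j))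
  have himage :
      {p : ℤ × Fin m | (∃ i < p.2, p.1 ∈ complP n S i) ∧ MB (complP n S) p.2 ≤ p.1} =
      (fun p => (complB n p.1, p.2)) ''
        {p : ℤ × Fin m | (∃ i < p.2, p.1 ∈ S i) ∧ 0 < p.1 ∧ p.1 ≤ mB S p.2} := by
    ext ⟨t, j⟩
    simp only [complP, Set.mem_ofPred_eq, Set.mem_image, Finset.mem_image, Prod.mk.injEq,
      Prod.exists]
    constructor
    · rintro ⟨⟨i, hij, s, hs, rfl⟩, hle⟩
      exact ⟨s, j, ⟨⟨i, hij, hs⟩, (hcompl i j s hij hs).1 hle⟩, rfl, rfl⟩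
    · rintro ⟨s, _, ⟨⟨i, hij, hs⟩, hpos⟩, rfl, rfl⟩
      exact ⟨⟨i, hij, s, hs, rfl⟩, (hcompl i _ s hij hs).2 hpos⟩
  have hinj : Set.InjOn (fun p : ℤ × Fin m => (complB n p.1, p.2))
      {p | (∃ i < p.2, p.1 ∈ S i) ∧ 0 < p.1 ∧ p.1 ≤ mB S p.2} := by
    refine (complB_injOn.prodMap (Set.injOn_id Set.univ)).mono ?_
    rintro ⟨s, j⟩ ⟨⟨i, -, hs⟩, -⟩
    exact ⟨hn i s hs, Set.mem_univ j⟩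
  rw [rcsB, robB, himage, hinj.ncard_image]

/-- rcs_B(π^c) = rob_B(π) for every ordered type B partition π. -/
theorem stmt10 (n k : ℕ) (S : Fin (2*k+1) → Finset ℤ) (hS : IsOrderedB n k S) :
    rcsB (complP n S) = robB S := by
  obtain ⟨hne, hdisj, hcover, h0, -⟩ := hS
  refine rcsB_complP_eq_robB S hne (fun j x hx => ?_) (fun i j hij h0j => ?_)
  · have hx' : x ∈ angleB n := hcover ▸ Finset.mem_biUnion.2 ⟨j, Finset.mem_univ j, hx⟩
    exact abs_le.2 (Finset.mem_Icc.1 hx')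
  · exact Finset.disjoint_left.1 (hdisj j 0 ((Fin.zero_le i).trans_lt hij).ne') h0j h0
end
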